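/- arXiv:2204.02759 — 6 statements merged into one kernel-verified Lean document; each statement's English description precedes it below -/
import Mathlib

section
/- Let f : ℕ → Bool have finite support and for each a with f(a) = true define match_f(a) as the least b > a so that #{i ∈ (a,b] : f(i) = false} > #{i ∈ (a,b] : f(i) = true}. Then the function match_f is injective on the set {a : f(a) = true}; in particular, in the arch diagram of f no two arches share their right endpoint. -/
/-- The ballot condition: in the interval `(a, b]` there are strictly more positions
carrying `∘` (value `false`) than positions carrying `×` (value `true`). -/
def BallotCond (f : ℕ → Bool) (a b : ℕ) : Prop :=
  ((Finset.Ioc a b).filter fun i => f i = true).card <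
    ((Finset.Ioc a b).filter fun i => f i = false).card

private lemma cnt_add (f : ℕ → Bool) (v : Bool) {a m b : ℕ} (h1 : a ≤ m) (h2 : m ≤ b) :
    ((Finset.Ioc a b).filter fun i => f i = v).card
      = ((Finset.Ioc a m).filter fun i => f i = v).card
        + ((Finset.Ioc m b).filter fun i => f i = v).card := by
  rw [← Finset.Ioc_union_Ioc_eq_Ioc h1 h2, Finset.filter_union,
    Finset.card_union_of_disjoint (Finset.disjoint_filter_filter (by
      rw [Finset.disjoint_left]; intro x hx hx'
      simp only [Finset.mem_Ioc] at hx hx'; omega))]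

private lemma cnt_succ (f : ℕ → Bool) (v : Bool) {a b : ℕ} (h : a ≤ b) :
    ((Finset.Ioc a (b+1)).filter fun i => f i = v).card
      = ((Finset.Ioc a b).filter fun i => f i = v).card
        + (if f (b+1) = v then 1 else 0) := by
  rw [cnt_add f v h (Nat.le_succ b)]
  congr 1
  rw [Nat.Ioc_succ_singleton, Finset.filter_singleton]
  split <;> simp

/-- the matching function of the arch diagram (sending each `×` to the
right endpoint of its arch, characterized by the ballot condition) is injective on
the set of positions of `×`: no two arches share their right endpoint. -/
theorem stmt5 (f : ℕ → Bool) (hfin : {i | f i = true}.Finite)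
    (matchF : ℕ → ℕ)
    (hmatch : ∀ a, f a = true → IsLeast {b | a < b ∧ BallotCond f a b} (matchF a)) :
    Set.InjOn matchF {a | f a = true} := by
  have key : ∀ a a', f a = true → f a' = true → a < a' → matchF a = matchF a' → False := by
    intro a a' ha ha' hlt heq
    obtain ⟨⟨hab, hball⟩, hmin⟩ := hmatch a ha
    obtain ⟨⟨ha'b, hball'⟩, hmin'⟩ := hmatch a' ha'
    rw [← heq] at ha'b hball' hmin'
    obtain ⟨e, he⟩ : ∃ e, matchF a = e + 1 := ⟨matchF a - 1, by omega⟩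
    rw [he] at hab ha'b hball hball' hmin hmin'
    obtain ⟨c, rfl⟩ : ∃ c, a' = c + 1 := ⟨a' - 1, by omega⟩
    have hae : a < e := by omega
    have ha'e : c + 1 ≤ e := by omega
    have hac : a ≤ c := by omega
    -- minimality: ballot fails strictly before e+1
    have h4 : ¬ BallotCond f a e := fun hb => absurd (hmin ⟨hae, hb⟩) (by omega)
    have h5 : ¬ BallotCond f (c+1) e := by
      rcases eq_or_lt_of_le ha'e with h | h
      · subst h; simp [BallotCond]
      · exact fun hb => absurd (hmin' ⟨h, hb⟩) (by omega)
    have h3 : ¬ BallotCond f a (c+1) := fun hb => absurd (hmin ⟨hlt, hb⟩) (by omega)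
    simp only [BallotCond, not_lt] at hball hball' h3 h4 h5
    -- step relations at e+1
    have sT : ((Finset.Ioc a (e+1)).filter fun i => f i = true).card
        = ((Finset.Ioc a e).filter fun i => f i = true).card
          + (if f (e+1) = true then 1 else 0) := cnt_succ f true hae.le
    have sF : ((Finset.Ioc a (e+1)).filter fun i => f i = false).card
        = ((Finset.Ioc a e).filter fun i => f i = false).card
          + (if f (e+1) = false then 1 else 0) := cnt_succ f false hae.le
    have sT' : ((Finset.Ioc (c+1) (e+1)).filter fun i => f i = true).card
        = ((Finset.Ioc (c+1) e).filter fun i => f i = true).card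
          + (if f (e+1) = true then 1 else 0) := cnt_succ f true ha'e
    have sF' : ((Finset.Ioc (c+1) (e+1)).filter fun i => f i = false).card
        = ((Finset.Ioc (c+1) e).filter fun i => f i = false).card
          + (if f (e+1) = false then 1 else 0) := cnt_succ f false ha'e
    have htb : (if f (e+1) = true then 1 else 0) + (if f (e+1) = false then 1 else 0) = 1 := by
      cases f (e+1) <;> simp
    -- additivity at c+1
    have addT : ((Finset.Ioc a (e+1)).filter fun i => f i = true).card
        = ((Finset.Ioc a (c+1)).filter fun i => f i = true).card
          + ((Finset.Ioc (c+1) (e+1)).filter fun i => f i = true).card :=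
      cnt_add f true (by omega) (by omega)
    have addF : ((Finset.Ioc a (e+1)).filter fun i => f i = false).card
        = ((Finset.Ioc a (c+1)).filter fun i => f i = false).card
          + ((Finset.Ioc (c+1) (e+1)).filter fun i => f i = false).card :=
      cnt_add f false (by omega) (by omega)
    -- step relations at c+1 (which carries ×)
    have stT : ((Finset.Ioc a (c+1)).filter fun i => f i = true).card
        = ((Finset.Ioc a c).filter fun i => f i = true).card
          + (if f (c+1) = true then 1 else 0) := cnt_succ f true hac
    have stF : ((Finset.Ioc a (c+1)).filter fun i => f i = false).card
        = ((Finset.Ioc a c).filter fun i => f i = false).card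
          + (if f (c+1) = false then 1 else 0) := cnt_succ f false hac
    simp only [ha', Bool.true_eq_false, if_true, if_false] at stT stF
    -- conclude the ballot condition holds already at c
    have hballc : BallotCond f a c := by
      simp only [BallotCond] at hball hball' h3 h4 h5 ⊢
      omega
    rcases eq_or_lt_of_le hac with h | h
    · subst h
      simp only [BallotCond, Finset.Ioc_self, Finset.filter_empty, Finset.card_empty] at hballc
      omega
    · exact absurd (hmin ⟨h, hballc⟩) (by omega)
  intro x hx y hy hxy
  rcases lt_trichotomy x y with h | h | h
  · exact (key x y hx hy h hxy).elim
  · exact h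
  · exact (key y x hy hx h hxy.symm).elim
end

section
/- Let f : ℕ → Bool have finite support and let match_f be defined by the ballot condition (match_f(a) is the least b > a with strictly more false-positions than true-positions in (a,b]). Then for any two positions a < a' with f(a) = f(a') = true, the intervals [a, match_f(a)] and [a', match_f(a')] are either disjoint or nested (i.e., either match_f(a) < a', or a' ≤ match_f(a) implies match_f(a') < match_f(a)). In other words, the arches of the arch diagram do not cross. -/
lemma card_filter_Ioc_add (p : ℕ → Prop) [DecidablePred p] {x y z : ℕ} (h1 : x ≤ y) (h2 : y ≤ z) :
    ((Finset.Ioc x z).filter p).card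
      = ((Finset.Ioc x y).filter p).card + ((Finset.Ioc y z).filter p).card := by
  rw [← Finset.card_union_of_disjoint, ← Finset.filter_union, Finset.Ioc_union_Ioc_eq_Ioc h1 h2]
  refine Finset.disjoint_filter_filter ?_
  rw [Finset.disjoint_left]
  intro i hi hi'
  simp only [Finset.mem_Ioc] at hi hi'
  omega

/-- arches do not cross: for `a < a'` both carrying `×` we never have
`a < a' ≤ matchF a < matchF a'`; the arches are disjoint or nested. -/
theorem stmt6 (f : ℕ → Bool) (hfin : {i | f i = true}.Finite)
    (matchF : ℕ → ℕ)
    (hmatch : ∀ a, f a = true → IsLeast {b | a < b ∧ BallotCond f a b} (matchF a))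
    (a a' : ℕ) (ha : f a = true) (ha' : f a' = true) (hlt : a < a') :
    ¬ (a' ≤ matchF a ∧ matchF a < matchF a') := by
  rintro ⟨h1, h2⟩
  obtain ⟨⟨ham, hball⟩, hmin⟩ := hmatch a ha
  obtain ⟨⟨ham', hball'⟩, hmin'⟩ := hmatch a' ha'
  rcases eq_or_lt_of_le h1 with heq | hlt'
  · -- a' = matchF a : then f (matchF a) = true, contradicting ballot minimality
    have hfb : ¬ BallotCond f a (matchF a - 1) := by
      rcases eq_or_lt_of_le (Nat.le_sub_one_of_lt ham) with hb | hb
      · rw [← hb]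
        simp [BallotCond]
      · intro hc
        exact absurd (hmin ⟨hb, hc⟩) (by omega)
    have hsing : Finset.Ioc (matchF a - 1) (matchF a) = {matchF a} := by
      ext x
      simp only [Finset.mem_Ioc, Finset.mem_singleton]
      omega
    have hfm : f (matchF a) = true := heq ▸ ha'
    have ht : ((Finset.Ioc (matchF a - 1) (matchF a)).filter fun i => f i = true).card = 1 := by
      rw [hsing, Finset.filter_singleton]
      simp [hfm]
    have hf : ((Finset.Ioc (matchF a - 1) (matchF a)).filter fun i => f i = false).card = 0 := by
      rw [hsing, Finset.filter_singleton]
      simp [hfm]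
    unfold BallotCond at hball hfb
    rw [card_filter_Ioc_add (fun i => f i = true) (by omega : a ≤ matchF a - 1)
        (by omega : matchF a - 1 ≤ matchF a),
      card_filter_Ioc_add (fun i => f i = false) (by omega : a ≤ matchF a - 1)
        (by omega : matchF a - 1 ≤ matchF a)] at hball
    omega
  · -- a' < matchF a : Ballot holds on (a', matchF a], so matchF a' ≤ matchF a
    have hnb : ¬ BallotCond f a a' := fun hc => absurd (hmin ⟨hlt, hc⟩) (by omega)
    have hb : BallotCond f a' (matchF a) := by
      unfold BallotCond at *
      rw [card_filter_Ioc_add (fun i => f i = true) hlt.le hlt'.le,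
        card_filter_Ioc_add (fun i => f i = false) hlt.le hlt'.le] at hball
      omega
    exact absurd (hmin' ⟨hlt', hb⟩) (by omega)
end

section
/- Let f : ℕ → Bool have finite support and let match_f(a) be the least b > a such that #{i ∈ (a,b] : f(i) = false} > #{i ∈ (a,b] : f(i) = true}. Then for every a with f(a) = true, the number of true positions strictly between a and match_f(a) equals the number of false positions strictly between a and match_f(a); consequently match_f(a) − a is odd. -/
/-- strictly under an arch, the numbers of `×` and `∘` are equal;
consequently every two-legged arch has odd length. -/
theorem stmt7 (f : ℕ → Bool) (hfin : {i | f i = true}.Finite)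
    (matchF : ℕ → ℕ)
    (hmatch : ∀ a, f a = true → IsLeast {b | a < b ∧ BallotCond f a b} (matchF a))
    (a : ℕ) (ha : f a = true) :
    ((Finset.Ioo a (matchF a)).filter fun i => f i = true).card =
      ((Finset.Ioo a (matchF a)).filter fun i => f i = false).card ∧
    Odd (matchF a - a) := by
  obtain ⟨⟨ham, hbc⟩, hmin⟩ := hmatch a ha
  set m := matchF a with hm
  set T : ℕ → ℕ := fun b => ((Finset.Ioc a b).filter fun i => f i = true).card with hT
  set F : ℕ → ℕ := fun b => ((Finset.Ioc a b).filter fun i => f i = false).card with hF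
  -- Ioc a m = insert m (Ioc a (m-1))
  have hioc : Finset.Ioc a m = insert m (Finset.Ioc a (m - 1)) := by
    ext i
    simp only [Finset.mem_Ioc, Finset.mem_insert]
    omega
  have hnotmem : m ∉ Finset.Ioc a (m - 1) := by
    simp only [Finset.mem_Ioc]; omega
  -- minimality: no ballot condition at m - 1
  have hprev : ¬ BallotCond f a (m - 1) := by
    rcases Nat.eq_or_lt_of_le (Nat.succ_le_of_lt ham) with h | h
    · intro hb
      unfold BallotCond at hb
      have : Finset.Ioc a (m - 1) = ∅ := by
        apply Finset.Ioc_eq_empty; omega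
      rw [this] at hb; simp at hb
    · intro hb
      have := hmin ⟨by omega, hb⟩
      omega
  unfold BallotCond at hbc hprev
  push_neg at hprev
  change F (m-1) ≤ T (m-1) at hprev
  change T m < F m at hbc
  have hfm : f m = false := by
    by_contra h
    have hfm' : f m = true := by revert h; cases f m <;> simp
    have hTm : T m = T (m-1) + 1 := by
      simp only [hT, hioc, Finset.filter_insert, hfm', if_pos rfl]
      rw [if_pos trivial, Finset.card_insert_of_notMem (fun hmem => hnotmem (Finset.mem_filter.mp hmem).1)]
    have hFm : F m = F (m-1) := by
      simp only [hF, hioc, Finset.filter_insert]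
      rw [if_neg (by simp [hfm'])]
    omega
  have hTm : T m = T (m-1) := by
    simp only [hT, hioc, Finset.filter_insert]
    rw [if_neg (by simp [hfm])]
  have hFm : F m = F (m-1) + 1 := by
    simp only [hF, hioc, Finset.filter_insert, hfm, if_pos rfl]
    rw [if_pos trivial, Finset.card_insert_of_notMem (fun hmem => hnotmem (Finset.mem_filter.mp hmem).1)]
  have heq : T (m-1) = F (m-1) := by omega
  have hioo : Finset.Ioo a m = Finset.Ioc a (m - 1) := by
    ext i
    simp only [Finset.mem_Ioc, Finset.mem_Ioo]
    omega
  constructor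
  · rw [hioo]; exact heq
  · have hcard : T m + F m = m - a := by
      have := Finset.card_filter_add_card_filter_not
        (s := Finset.Ioc a m) (p := fun i => f i = true)
      simp only [hT, hF]
      rw [Nat.card_Ioc] at this
      simpa [Bool.not_eq_true] using this
    refine ⟨T (m-1), by omega⟩
end

section
/- Let f : ℕ → Bool have finite support and define match_f by the ballot condition. For every a with f(a) = true and every a' with a < a' < match_f(a) and f(a') = true, one has match_f(a') < match_f(a). That is, every × lying strictly under an arch is matched strictly inside that arch. -/
/-- Discrepancy: number of `false`s minus number of `true`s on `(a, b]`. -/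
def dd (f : ℕ → Bool) (a b : ℕ) : ℤ :=
  (((Finset.Ioc a b).filter fun i => f i = false).card : ℤ) -
    ((Finset.Ioc a b).filter fun i => f i = true).card

lemma ballot_iff_dd (f : ℕ → Bool) (a b : ℕ) : BallotCond f a b ↔ 0 < dd f a b := by
  unfold BallotCond dd; omega

lemma dd_add (f : ℕ → Bool) {a a' b : ℕ} (h1 : a ≤ a') (h2 : a' ≤ b) :
    dd f a b = dd f a a' + dd f a' b := by
  have hu : Finset.Ioc a a' ∪ Finset.Ioc a' b = Finset.Ioc a b :=
    Finset.Ioc_union_Ioc_eq_Ioc h1 h2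
  have hd : Disjoint (Finset.Ioc a a') (Finset.Ioc a' b) := by
    rw [Finset.disjoint_left]; intro x hx hx'
    simp only [Finset.mem_Ioc] at hx hx'; omega
  have key : ∀ p : ℕ → Prop, ∀ _ : DecidablePred p,
      ((Finset.Ioc a b).filter p).card =
        ((Finset.Ioc a a').filter p).card + ((Finset.Ioc a' b).filter p).card := by
    intro p hp
    rw [← hu, Finset.filter_union, Finset.card_union_of_disjoint
      (Finset.disjoint_filter_filter hd)]
  unfold dd
  rw [key (fun i => f i = false) _, key (fun i => f i = true) _]
  push_cast; ring

lemma dd_self (f : ℕ → Bool) (a : ℕ) : dd f a a = 0 := by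
  simp [dd]

lemma dd_step (f : ℕ → Bool) {a b : ℕ} (h : a < b) :
    dd f a b = dd f a (b - 1) + (if f b = true then -1 else 1) := by
  have h1 : a ≤ b - 1 := by omega
  have h2 : b - 1 ≤ b := by omega
  rw [dd_add f h1 h2]
  congr 1
  have hsing : Finset.Ioc (b - 1) b = {b} := by
    ext i; simp only [Finset.mem_Ioc, Finset.mem_singleton]; omega
  unfold dd
  rw [hsing]
  cases hb : f b <;> simp [Finset.filter_singleton, hb]

/-- every `×` lying strictly under an arch is matched strictly inside
that arch. -/
theorem stmt8 (f : ℕ → Bool) (hfin : {i | f i = true}.Finite)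
    (matchF : ℕ → ℕ)
    (hmatch : ∀ a, f a = true → IsLeast {b | a < b ∧ BallotCond f a b} (matchF a))
    (a a' : ℕ) (ha : f a = true) (ha' : f a' = true)
    (h1 : a < a') (h2 : a' < matchF a) :
    matchF a' < matchF a := by
  obtain ⟨⟨hab, hBab⟩, hminA⟩ := hmatch a ha
  obtain ⟨⟨ha'b', hBa'b'⟩, hminA'⟩ := hmatch a' ha'
  have hdab : 0 < dd f a (matchF a) := (ballot_iff_dd f a (matchF a)).1 hBab
  have hdaa' : dd f a a' ≤ 0 := by
    by_contra h
    push_neg at h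
    have := hminA ⟨h1, (ballot_iff_dd f a a').2 h⟩
    omega
  have hsplit : dd f a (matchF a) = dd f a a' + dd f a' (matchF a) :=
    dd_add f (le_of_lt h1) (le_of_lt h2)
  have hBa'b : BallotCond f a' (matchF a) := (ballot_iff_dd f a' (matchF a)).2 (by omega)
  have hb'le : matchF a' ≤ matchF a := hminA' ⟨h2, hBa'b⟩
  rcases lt_or_eq_of_le hb'le with h | heq
  · exact h
  exfalso
  -- d(a, matchF a) = 1
  have hdab1 : dd f a (matchF a) = 1 := by
    have hstep := dd_step f hab
    have hprev : dd f a (matchF a - 1) ≤ 0 := by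
      rcases Nat.lt_or_ge a (matchF a - 1) with hc | hc
      · by_contra h
        push_neg at h
        have := hminA ⟨hc, (ballot_iff_dd f a (matchF a - 1)).2 h⟩
        omega
      · have he : matchF a - 1 = a := by omega
        rw [he, dd_self]
    split_ifs at hstep <;> omega
  -- d(a', matchF a) = 1, since matchF a' = matchF a
  have hda'b1 : dd f a' (matchF a) = 1 := by
    have hda'b : 0 < dd f a' (matchF a) := (ballot_iff_dd f a' (matchF a)).1 hBa'b
    have hstep := dd_step f h2
    have hprev : dd f a' (matchF a - 1) ≤ 0 := by
      rcases Nat.lt_or_ge a' (matchF a - 1) with hc | hc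
      · by_contra h
        push_neg at h
        have := hminA' ⟨hc, (ballot_iff_dd f a' (matchF a - 1)).2 h⟩
        omega
      · have he : matchF a - 1 = a' := by omega
        rw [he, dd_self]
    split_ifs at hstep <;> omega
  -- hence d(a, a') = 0
  have hdaa'0 : dd f a a' = 0 := by omega
  -- step back across a' (which carries ×): d(a, a'-1) = 1
  have hstep' := dd_step f h1
  rw [if_pos ha'] at hstep'
  have hdprev : dd f a (a' - 1) = 1 := by omega
  rcases Nat.lt_or_ge a (a' - 1) with hc | hc
  · have := hminA ⟨hc, (ballot_iff_dd f a (a' - 1)).2 (by omega)⟩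
    omega
  · have he : a' - 1 = a := by omega
    rw [he, dd_self] at hdprev
    omega
end

section
/- Let λ = (λ_1 > λ_2 > ... > λ_n) be a strictly decreasing sequence of integers with associated diagram f, and for each j let g_j be the diagram obtained from f by moving the × at position λ_j to position match_f(λ_j). Then the diagrams g_1, ..., g_n are pairwise distinct, and each g_j again corresponds to a strictly decreasing sequence of n integers (i.e., it is a valid weight diagram with n symbols ×, no two at the same position). Hence each vertex of the graph on strictly decreasing n-tuples with edges given by single-arch moves has exactly n direct successors. -/
/-- The ballot condition on ℤ: in the interval `(a, b]` there are strictly more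
positions carrying `∘` (value `false`) than positions carrying `×` (value `true`). -/
def BallotCondZ (f : ℤ → Bool) (a b : ℤ) : Prop :=
  ((Finset.Ioc a b).filter fun i => f i = true).card <
    ((Finset.Ioc a b).filter fun i => f i = false).card

lemma BallotCondZ.lt_of_card {a b : ℕ} (h : a + 1 < b) : a < b := by omega

/-- The matching position of a `×` always carries `∘`. -/
lemma matchF_false (f : ℤ → Bool) (a b : ℤ)
    (hb : IsLeast {b | a < b ∧ BallotCondZ f a b} b) : f b = false := by
  obtain ⟨⟨hab, hball⟩, hle⟩ := hb
  by_contra h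
  have hfb : f b = true := by simpa using h
  rcases eq_or_lt_of_le (by omega : a + 1 ≤ b) with heq | hlt
  · have : Finset.Ioc a b = {b} := by
      ext x; simp [Finset.mem_Ioc]; omega
    rw [BallotCondZ, this] at hball
    simp [Finset.filter_singleton, hfb] at hball
  · have hsplit : Finset.Ioc a b = insert b (Finset.Ioc a (b - 1)) := by
      ext x; simp [Finset.mem_Ioc]; omega
    have hnot : b ∉ Finset.Ioc a (b - 1) := by simp [Finset.mem_Ioc]
    have hball' : BallotCondZ f a (b - 1) := by
      rw [BallotCondZ, hsplit, Finset.filter_insert, Finset.filter_insert] at hball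
      simp only [hfb, if_true, Bool.true_eq_false, if_false] at hball
      rw [Finset.card_insert_of_notMem
        (by simp [hnot, Finset.mem_filter, Finset.mem_Ioc])] at hball
      exact BallotCondZ.lt_of_card hball
    have := hle ⟨by omega, hball'⟩
    omega

/-- the `n` diagrams obtained from the diagram of a strictly decreasing
`n`-tuple by single-arch moves are pairwise distinct, and each is again the diagram of
a strictly decreasing `n`-tuple. Hence every vertex of the single-arch-move graph has
exactly `n` direct successors. -/
theorem stmt10 (n : ℕ) (lam : Fin n → ℤ)
    (hdec : ∀ i j : Fin n, i < j → lam j < lam i)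
    (f : ℤ → Bool) (hf : ∀ i : ℤ, f i = true ↔ ∃ j, lam j = i)
    (matchF : ℤ → ℤ)
    (hmatch : ∀ a : ℤ, f a = true →
      IsLeast {b | a < b ∧ BallotCondZ f a b} (matchF a))
    (g : Fin n → (ℤ → Bool))
    (hg : ∀ j, g j =
      Function.update (Function.update f (lam j) false) (matchF (lam j)) true) :
    Function.Injective g ∧
    ∀ j : Fin n, ∃ mu : Fin n → ℤ,
      (∀ i i' : Fin n, i < i' → mu i' < mu i) ∧
      (∀ i : ℤ, g j i = true ↔ ∃ kk, mu kk = i) := by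
  have hinj : Function.Injective lam := by
    intro i j h
    rcases lt_trichotomy i j with hij | hij | hij
    · exact absurd h (hdec i j hij).ne'
    · exact hij
    · exact absurd h (hdec j i hij).ne
  have hflam : ∀ j, f (lam j) = true := fun j => (hf (lam j)).2 ⟨j, rfl⟩
  have hm : ∀ j, f (matchF (lam j)) = false :=
    fun j => matchF_false f (lam j) _ (hmatch (lam j) (hflam j))
  have hmlam : ∀ j k, matchF (lam j) ≠ lam k := by
    intro j k h
    have := hm j
    rw [h, hflam k] at this
    exact Bool.true_eq_false.mp this
  -- description of g j
  have hgval : ∀ j (i : ℤ), g j i = true ↔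
      (i = matchF (lam j) ∨ (i ≠ lam j ∧ f i = true)) := by
    intro j i
    rw [hg j]
    by_cases h1 : i = matchF (lam j)
    · subst h1; simp [Function.update_self]
    · rw [Function.update_of_ne h1]
      by_cases h2 : i = lam j
      · subst h2
        rw [Function.update_self]
        constructor
        · intro h; exact absurd h (by simp)
        · rintro (h' | ⟨h', _⟩)
          · exact absurd h'.symm (hmlam j j)
          · exact absurd rfl h'
      · rw [Function.update_of_ne h2]; tauto
  constructor
  · intro j k hgjk
    by_contra hne
    have h1 : g j (lam k) = true := by
      rw [hgval]
      exact Or.inr ⟨fun h => hne (hinj h.symm), hflam k⟩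
    have h2 : g k (lam k) = false := by
      rw [Bool.eq_false_iff]
      intro h
      rcases (hgval k (lam k)).1 h with h' | h'
      · exact hmlam k k h'.symm
      · exact h'.1 rfl
    rw [hgjk, h2] at h1
    exact Bool.false_ne_true h1
  · intro j
    -- the support of g j as a Finset
    set T : Finset ℤ :=
      insert (matchF (lam j)) ((Finset.univ.image lam).erase (lam j)) with hT
    have hmemT : ∀ i : ℤ, i ∈ T ↔ g j i = true := by
      intro i
      rw [hgval, hT]
      simp only [Finset.mem_insert, Finset.mem_erase, Finset.mem_image,
        Finset.mem_univ, true_and]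
      constructor
      · rintro (h | ⟨h1, k, h2⟩)
        · exact Or.inl h
        · exact Or.inr ⟨h1, (hf i).2 ⟨k, h2⟩⟩
      · rintro (h | ⟨h1, h2⟩)
        · exact Or.inl h
        · exact Or.inr ⟨h1, (hf i).1 h2⟩
    have hcard : T.card = n := by
      rw [hT, Finset.card_insert_of_notMem, Finset.card_erase_of_mem,
        Finset.card_image_of_injective _ hinj, Finset.card_univ, Fintype.card_fin]
      · have hn : 0 < n := j.pos
        omega
      · exact Finset.mem_image.2 ⟨j, Finset.mem_univ j, rfl⟩
      · intro h
        rcases Finset.mem_erase.1 h with ⟨_, h2⟩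
        rcases Finset.mem_image.1 h2 with ⟨k, _, hk⟩
        exact hmlam j k hk.symm
    have hn : 0 < n := j.pos
    let e := T.orderIsoOfFin hcard
    refine ⟨fun kk => (e kk.rev : ℤ), ?_, ?_⟩
    · intro i i' hii
      have : i'.rev < i.rev := Fin.rev_lt_rev.2 hii
      exact_mod_cast e.strictMono this
    · intro i
      rw [← hmemT]
      constructor
      · intro hi
        refine ⟨(e.symm ⟨i, hi⟩).rev, ?_⟩
        simp only [Fin.rev_rev]
        exact congrArg Subtype.val (e.apply_symm_apply ⟨i, hi⟩)
      · rintro ⟨kk, rfl⟩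
        exact (e kk.rev).2
end

section
/- Let f : ℕ → Bool have finite support, let a be a position with f(a) = true and b = match_f(a). Let λ_1 satisfy λ_1 − 1 > max(support f), and form the diagram f' by changing f at exactly the positions λ_1 − 1 and λ_1, so that f' agrees with f at all other positions, f'(λ_1 − 1) = true and f'(λ_1) = false. Then, if b < λ_1 − 1, the arch of f' originating at a has the same right endpoint b, i.e. match_{f'}(a) = b. -/
/-- locality of the greedy arch construction. If all positions
`≥ L - 1` of `f` are empty and a new `×` is appended at position `L - 1`
(strictly to the right of all existing symbols), then the arch of any existing `×`
at position `a` whose endpoint `b` satisfies `b < L - 1` is unchanged: `b` is still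
the least position satisfying the ballot condition for the new diagram. -/
theorem stmt14 (f : ℕ → Bool) (hfin : {i | f i = true}.Finite)
    (L : ℕ) (hL : ∀ i : ℕ, L - 1 ≤ i → f i = false)
    (a b : ℕ) (ha : f a = true)
    (hb : IsLeast {b' | a < b' ∧ BallotCond f a b'} b)
    (hbL : b < L - 1)
    (f' : ℕ → Bool) (hf' : f' = Function.update f (L - 1) true) :
    IsLeast {b' | a < b' ∧ BallotCond f' a b'} b := by
  have key : ∀ b', b' < L - 1 → (BallotCond f' a b' ↔ BallotCond f a b') := by
    intro b' hb'
    have hagree : ∀ i ∈ Finset.Ioc a b', f' i = f i := by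
      intro i hi
      have : i ≤ b' := (Finset.mem_Ioc.mp hi).2
      rw [hf', Function.update_of_ne (by omega)]
    have h1 : (Finset.Ioc a b').filter (fun i => f' i = true) =
        (Finset.Ioc a b').filter (fun i => f i = true) :=
      Finset.filter_congr (fun i hi => by rw [hagree i hi])
    have h2 : (Finset.Ioc a b').filter (fun i => f' i = false) =
        (Finset.Ioc a b').filter (fun i => f i = false) :=
      Finset.filter_congr (fun i hi => by rw [hagree i hi])
    unfold BallotCond
    rw [h1, h2]
  obtain ⟨⟨hab, hcond⟩, hlb⟩ := hb
  constructor
  · exact ⟨hab, (key b hbL).mpr hcond⟩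
  · intro b' ⟨hab', hcond'⟩
    by_cases h : b' < L - 1
    · exact hlb ⟨hab', (key b' h).mp hcond'⟩
    · omega
end
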